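/- arXiv:1605.01105 — 10 statements merged into one kernel-verified Lean document; each statement's English description precedes it below -/
import Mathlib

section
/- Let C_0 be an [n,t] linear code over F_q with generator matrix G_0, and let C be an [n,k] subcode of C_0 with generator matrix G, where k ≤ t. Then C is a maximally recoverable subcode of C_0 (i.e., for every S ⊆ [n] with |S| = k and rank(G_0 restricted to columns S) = k we have rank(G restricted to S) = k) if and only if for every set S ⊆ [n] with |S| ≤ k, rank(G_0 restricted to S) = rank(G restricted to S). -/
open Matrix

section Defs
variable {F : Type*} [Field F]

/-- Rank of the submatrix of `G` consisting of the columns indexed by `S`. -/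
noncomputable def colRank {m α : Type*} [Fintype α] (G : Matrix m α F) (S : Finset α) : ℕ :=
  (G.submatrix id (fun j : S => (j : α))).rank

/-- The row space of a matrix. -/
def rowSpan {m α : Type*} (G : Matrix m α F) : Submodule F (α → F) :=
  Submodule.span F (Set.range fun i => G i)

/-- Rank of the restriction (puncturing) of a code `C` to the coordinates in `S`. -/
noncomputable def restrRank {α : Type*} (C : Submodule F (α → F)) (S : Finset α) : ℕ :=
  Module.finrank F (C.map (LinearMap.funLeft F F (fun j : S => (j : α))))

/-- Shortening of a code on coordinates `α ⊕ β` to the coordinates `α`. -/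
noncomputable def shortenSum {α β : Type*} (D : Submodule F ((α ⊕ β) → F)) :
    Submodule F (α → F) :=
  Submodule.map (LinearMap.funLeft F F Sum.inl)
    (D ⊓ (⨅ j : β, LinearMap.ker
      (LinearMap.proj (R := F) (Sum.inr j) : ((α ⊕ β) → F) →ₗ[F] F)))

/-- A valid (zero-error, worst case) scheme for the point-to-point function-update problem. -/
def IsValidScheme [DecidableEq F] {n m ℓ : ℕ} (A : Matrix (Fin m) (Fin n) F)
    (H : Matrix (Fin ℓ) (Fin n) F) (ε : ℕ)
    (D : (Fin ℓ → F) → (Fin m → F) → (Fin m → F)) : Prop :=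
  ∀ X E : Fin n → F, hammingNorm E ≤ ε →
    D (H.mulVec (X + E)) (A.mulVec X) = A.mulVec (X + E)

end Defs


/-
Given `|S| ≤ k`, pick `T ⊆ S` whose `G₀`-columns form a basis of the `G₀`-columns on `S`.
Since `|T| ≤ k ≤ t = rank G₀`, extend `T` to a set `U` of `k` columns independent for `G₀`.
Maximal recoverability makes the `G`-columns on `U`, hence on `T`, independent, so
`rank G|_S ≥ |T| = rank G₀|_S`; the reverse inequality holds because `C ⊆ C₀`.
-/

theorem restrRank_mono {F α : Type*} [Field F] {C D : Submodule F (α → F)} (h : C ≤ D)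
    (S : Finset α) : restrRank C S ≤ restrRank D S :=
  Submodule.finrank_mono (Submodule.map_mono h)

section ColRank

variable {F : Type*} [Field F] {m α : Type*} [Fintype α]

theorem colRank_eq_finrank_span (G : Matrix m α F) (S : Finset α) :
    colRank G S = Module.finrank F (Submodule.span F (G.col '' S)) := by
  rw [colRank, Matrix.rank_eq_finrank_span_cols, Set.image_eq_range]
  rfl

theorem colRank_univ (G : Matrix m α F) : colRank G Finset.univ = G.rank := by
  rw [colRank_eq_finrank_span, Finset.coe_univ, Set.image_univ,
    Matrix.rank_eq_finrank_span_cols]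

theorem colRank_eq_card_iff_linearIndepOn (G : Matrix m α F) (S : Finset α) :
    colRank G S = S.card ↔ LinearIndepOn F G.col (S : Set α) := by
  rw [LinearIndepOn, linearIndependent_iff_card_eq_finrank_span, colRank_eq_finrank_span,
    Set.image_eq_range, Set.finrank, eq_comm]
  simp only [Finset.coe_sort_coe, Fintype.card_coe]

theorem colRank_le_card (G : Matrix m α F) (S : Finset α) : colRank G S ≤ S.card :=
  (Matrix.rank_le_card_width _).trans_eq (Fintype.card_coe S)

theorem colRank_mono [Finite m] (G : Matrix m α F) {S T : Finset α} (h : S ⊆ T) :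
    colRank G S ≤ colRank G T := by
  simp only [colRank_eq_finrank_span]
  exact Submodule.finrank_mono (Submodule.span_mono (Set.image_mono h))

theorem colRank_eq_restrRank_rowSpan [Finite m] (G : Matrix m α F) (S : Finset α) :
    colRank G S = restrRank (rowSpan G) S := by
  rw [colRank, Matrix.rank_eq_finrank_span_row, restrRank, rowSpan, Submodule.map_span,
    ← Set.range_comp]
  rfl

theorem colRank_le_of_rowSpan_le {k t : Type*} [Finite k] [Finite t] {G : Matrix k α F}
    {G₀ : Matrix t α F} (h : rowSpan G ≤ rowSpan G₀) (S : Finset α) :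
    colRank G S ≤ colRank G₀ S := by
  simpa only [colRank_eq_restrRank_rowSpan] using restrRank_mono h S

theorem exists_linearIndepOn_superset_card_eq (G : Matrix m α F) {T S : Finset α} {k : ℕ}
    (hTS : T ⊆ S) (hT : LinearIndepOn F G.col (T : Set α)) (hTk : T.card ≤ k)
    (hkS : k ≤ colRank G S) :
    ∃ U : Finset α, T ⊆ U ∧ U ⊆ S ∧ U.card = k ∧ LinearIndepOn F G.col (U : Set α) := by
  obtain ⟨B, hBS, hTB, hSB, hB⟩ := exists_linearIndepOn_extension hT (Finset.coe_subset.mpr hTS)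
  lift B to Finset α using S.finite_toSet.subset hBS
  rw [Finset.coe_subset] at hBS hTB
  have hBcard : B.card = colRank G S := by
    rw [← (colRank_eq_card_iff_linearIndepOn G B).mpr hB, colRank_eq_finrank_span,
      colRank_eq_finrank_span,
      le_antisymm (Submodule.span_mono (Set.image_mono hBS)) (Submodule.span_le.mpr hSB)]
  obtain ⟨U, hTU, hUB, hUk⟩ := Finset.exists_subsuperset_card_eq hTB hTk (hkS.trans hBcard.ge)
  exact ⟨U, hTU, hUB.trans hBS, hUk, hB.mono (Finset.coe_subset.mpr hUB)⟩

end ColRank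

theorem mrsc_iff_rank_eq_general {F : Type*} [Field F] {n t k : ℕ} (hkt : k ≤ t)
    (G0 : Matrix (Fin t) (Fin n) F) (G : Matrix (Fin k) (Fin n) F)
    (hG0 : G0.rank = t)
    (hsub : ∀ i, G i ∈ rowSpan G0) :
    (∀ S : Finset (Fin n), S.card = k → colRank G0 S = k → colRank G S = k) ↔
      (∀ S : Finset (Fin n), S.card ≤ k → colRank G0 S = colRank G S) := by
  refine ⟨fun hMR S hSk => ?_, fun h S hS hS₀ => h S hS.le ▸ hS₀⟩
  have hle : colRank G S ≤ colRank G0 S :=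
    colRank_le_of_rowSpan_le (Submodule.span_le.mpr (Set.range_subset_iff.mpr hsub)) S
  obtain ⟨T, -, hTS, hTcard, hT⟩ :=
    exists_linearIndepOn_superset_card_eq G0 (Finset.empty_subset S)
      (by simp) (Nat.zero_le _) le_rfl
  have hTk : T.card ≤ k := hTcard ▸ (colRank_le_card G0 S).trans hSk
  obtain ⟨U, hTU, -, hUk, hU⟩ :=
    exists_linearIndepOn_superset_card_eq G0 (Finset.subset_univ T) hT hTk
      (by rw [colRank_univ, hG0]; exact hkt)
  have hG0U : colRank G0 U = k := hUk ▸ (colRank_eq_card_iff_linearIndepOn G0 U).mpr hU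
  have hGU : LinearIndepOn F G.col (U : Set (Fin n)) :=
    (colRank_eq_card_iff_linearIndepOn G U).mp ((hMR U hUk hG0U).trans hUk.symm)
  have hGT : colRank G T = T.card :=
    (colRank_eq_card_iff_linearIndepOn G T).mpr (hGU.mono (Finset.coe_subset.mpr hTU))
  refine le_antisymm ?_ hle
  calc colRank G0 S = colRank G T := hTcard.symm.trans hGT.symm
    _ ≤ colRank G S := colRank_mono G hTS

/-- `C` (generated by `G`, an `[n,k]` subcode of the `[n,t]` code generated
by `G0`) is an MRSC of `C₀` iff the column ranks of `G0` and `G` agree on all column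
sets of size at most `k`. -/
theorem mrsc_iff_rank_eq {F : Type*} [Field F] [Fintype F] {n t k : ℕ} (hkt : k ≤ t)
    (G0 : Matrix (Fin t) (Fin n) F) (G : Matrix (Fin k) (Fin n) F)
    (hG0 : G0.rank = t) (hG : G.rank = k)
    (hsub : ∀ i, G i ∈ rowSpan G0) :
    (∀ S : Finset (Fin n), S.card = k → colRank G0 S = k → colRank G S = k) ↔
      (∀ S : Finset (Fin n), S.card ≤ k → colRank G0 S = colRank G S) :=
  mrsc_iff_rank_eq_general hkt G0 G hG0 hsub
end

section
/- Let C_0 be an [n,t] linear code over F_q and let C be an [n,k] subcode with k ≤ t. Then C is a maximally recoverable subcode of C_0 if and only if every set S ⊆ [n] with |S| = k that is a k-core of C_0^⊥ is also a k-core of C^⊥. -/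
open Matrix

section Aux
variable {F : Type*} [Field F]

lemma mulVec_restrict' {m n : ℕ} (M : Matrix (Fin m) (Fin n) F)
    (S : Finset (Fin n)) (c : Fin n → F) (hc : ∀ i, c i ≠ 0 → i ∈ S) :
    (M.submatrix id (fun j : S => (j : Fin n))).mulVec (fun j : S => c j) = M.mulVec c := by
  ext i
  simp only [Matrix.mulVec, dotProduct, Matrix.submatrix_apply, id]
  rw [Finset.sum_coe_sort S (fun j => M i j * c j)]
  refine Finset.sum_subset (Finset.subset_univ S) ?_
  intro j _ hj
  have : c j = 0 := by by_contra h; exact hj (hc j h)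
  simp [this]

lemma colRank_eq_card_iff' {m n : ℕ} (M : Matrix (Fin m) (Fin n) F)
    (S : Finset (Fin n)) :
    colRank M S = S.card ↔
      ∀ c : Fin n → F, M.mulVec c = 0 → c ≠ 0 → ¬ (∀ i, c i ≠ 0 → i ∈ S) := by
  set A := M.submatrix id (fun j : S => (j : Fin n)) with hA
  have hrn := A.mulVecLin.finrank_range_add_finrank_ker
  have hdom : Module.finrank F (S → F) = S.card := by
    simp [Module.finrank_fintype_fun_eq_card]
  rw [hdom] at hrn
  constructor
  · intro hr c hMc hc0 hsupp
    have hker : LinearMap.ker A.mulVecLin = ⊥ := by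
      have h0 : Module.finrank F (LinearMap.ker A.mulVecLin) = 0 := by
        have : A.rank = S.card := hr
        rw [Matrix.rank] at this
        omega
      exact Submodule.finrank_eq_zero.mp h0
    have hv : A.mulVecLin (fun j : S => c j) = 0 := by
      rw [Matrix.mulVecLin_apply, mulVec_restrict' M S c hsupp, hMc]
    have hv0 : (fun j : S => c j) = 0 := by
      rwa [← LinearMap.mem_ker, hker, Submodule.mem_bot] at hv
    apply hc0
    funext i
    by_cases h : i ∈ S
    · exact congrFun hv0 ⟨i, h⟩
    · by_contra hci; exact h (hsupp i hci)
  · intro H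
    have hker : LinearMap.ker A.mulVecLin = ⊥ := by
      rw [LinearMap.ker_eq_bot']
      intro v hv
      by_contra hv0
      classical
      set c : Fin n → F := fun i => if h : i ∈ S then v ⟨i, h⟩ else 0 with hc
      have hcs : ∀ i, c i ≠ 0 → i ∈ S := by
        intro i hi
        by_contra h
        exact hi (by simp [hc, h])
      have hvc : (fun j : S => c j) = v := by
        funext j; simp [hc, j.2]
      have hMc : M.mulVec c = 0 := by
        rw [← mulVec_restrict' M S c hcs, hvc]
        exact hv
      have hc0 : c ≠ 0 := by
        intro h
        apply hv0
        funext j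
        have := congrFun h (j : Fin n)
        simpa [hc, j.2] using this
      exact H c hMc hc0 hcs
    rw [hker] at hrn
    show A.rank = S.card
    rw [Matrix.rank]
    simpa using hrn

end Aux

/-- `C` is an MRSC of `C₀` iff every `k`-core of `C₀⊥` is a `k`-core of `C⊥`.
Here `S` is an `ℓ`-core of a code `D` if no nonzero codeword of `D` has support in `S`;
dual codewords of the code generated by `M` are the vectors `c` with `M.mulVec c = 0`. -/
theorem mrsc_iff_core_to_core {F : Type*} [Field F] [Fintype F]
    {n t k : ℕ} (hkt : k ≤ t)
    (G0 : Matrix (Fin t) (Fin n) F) (G : Matrix (Fin k) (Fin n) F)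
    (hG0 : G0.rank = t) (hG : G.rank = k)
    (hsub : ∀ i, G i ∈ rowSpan G0) :
    (∀ S : Finset (Fin n), S.card = k → colRank G0 S = k → colRank G S = k) ↔
      (∀ S : Finset (Fin n), S.card = k →
        (∀ c : Fin n → F, G0.mulVec c = 0 → c ≠ 0 → ¬ (∀ i, c i ≠ 0 → i ∈ S)) →
        (∀ c : Fin n → F, G.mulVec c = 0 → c ≠ 0 → ¬ (∀ i, c i ≠ 0 → i ∈ S))) := by
  constructor
  · intro H S hS h0
    have := H S hS (hS ▸ (colRank_eq_card_iff' G0 S).mpr h0)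
    exact (colRank_eq_card_iff' G S).mp (hS ▸ this)
  · intro H S hS h0
    have := H S hS ((colRank_eq_card_iff' G0 S).mp (hS ▸ h0))
    exact hS ▸ (colRank_eq_card_iff' G S).mpr this
end

section
/- Let C_0 be an [n,t] linear code over F_q with generator matrix G_0 ∈ F_q^{t×n}, let Q = q^t, let α_1,...,α_t be a basis of F_Q over F_q, and define β_1,...,β_n ∈ F_Q by [β_1 ... β_n] = [α_1 ... α_t] G_0. Let C be the [n,k] code over F_Q generated by the k×n Moore-type matrix G with G(i,j) = β_j^{q^{i-1}}, 1 ≤ i ≤ k. Then C is a maximally recoverable subcode of the [n,t] code over F_Q generated by G_0. -/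
/-!
If the columns of `G0` indexed by `S` are independent, then so are the corresponding `β j`
over `F`, since `β` is `G0` read in the basis `b`. A Moore matrix of `F`-independent elements
is invertible: a vector `c` in its left kernel gives a nonzero `q`-polynomial `∑ cᵢ X ^ q ^ i`
of degree `< q ^ k` vanishing on the `F`-span of the `β j`, which has `q ^ k` elements, because
the roots of a `q`-polynomial form an `F`-subspace.
-/

open Matrix

open Polynomial

theorem colRank_eq_card_iff {K m α : Type*} [Field K] [Fintype α] (G : Matrix m α K)
    (S : Finset α) : colRank G S = S.card ↔ LinearIndependent K fun j : S => G.col j := by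
  rw [colRank, rank_eq_finrank_span_cols, linearIndependent_iff_card_eq_finrank_span,
    Fintype.card_coe, eq_comm]
  rfl

section QPolynomial

variable {R : Type*} [Semiring R]

noncomputable def qPolynomial {k : ℕ} (q : ℕ) (c : Fin k → R) : R[X] :=
  ∑ i, C (c i) * X ^ q ^ (i : ℕ)

theorem coeff_qPolynomial_pow {k q : ℕ} (hq : 1 < q) (c : Fin k → R) (i : Fin k) :
    (qPolynomial q c).coeff (q ^ (i : ℕ)) = c i := by
  simp only [qPolynomial, finsetSum_coeff, coeff_C_mul_X_pow]
  rw [Finset.sum_eq_single i (fun j _ hji => if_neg fun h => hji ?_) (by simp), if_pos rfl]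
  exact Fin.ext (Nat.pow_right_injective hq h.symm)

theorem qPolynomial_ne_zero {k q : ℕ} (hq : 1 < q) {c : Fin k → R} (hc : c ≠ 0) :
    qPolynomial q c ≠ 0 := by
  obtain ⟨i, hi⟩ := Function.ne_iff.1 hc
  exact fun h => hi (by rw [← coeff_qPolynomial_pow hq c i, h, coeff_zero, Pi.zero_apply])

theorem natDegree_qPolynomial_lt {k q : ℕ} (hq : 1 < q) (c : Fin k → R) :
    (qPolynomial q c).natDegree < q ^ k := by
  refine (natDegree_sum_le_of_forall_le _ _ fun i _ => ?_).trans_lt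
    (Nat.sub_one_lt (pow_pos (zero_lt_one.trans hq) k).ne')
  exact (natDegree_C_mul_X_pow_le _ _).trans
    (Nat.le_sub_one_of_lt (Nat.pow_lt_pow_right hq i.isLt))

end QPolynomial

theorem card_pow_le_natDegree_of_isRoot_span {R L : Type*} [Semiring R] [Fintype R]
    [CommRing L] [IsDomain L] [Module R L] {k : ℕ} {p : L[X]} (hp : p ≠ 0) {γ : Fin k → L}
    (hγ : LinearIndependent R γ) (hroot : ∀ x ∈ Submodule.span R (Set.range γ), p.IsRoot x) :
    Fintype.card R ^ k ≤ p.natDegree := by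
  classical
  have hinj := linearIndependent_iff_injective_fintypeLinearCombination.1 hγ
  calc Fintype.card R ^ k = (Finset.univ.image (Fintype.linearCombination R γ)).card := by
        rw [Finset.card_image_of_injective _ hinj, Finset.card_univ, Fintype.card_fun,
          Fintype.card_fin]
    _ ≤ p.natDegree := card_le_degree_of_subset_roots fun x hx => by
        obtain ⟨d, -, rfl⟩ := Finset.mem_image.1 hx
        exact (mem_roots hp).2 (hroot _ (Fintype.range_linearCombination R γ ▸ ⟨d, rfl⟩))

def mooreMatrix {M ι : Type*} [Monoid M] (q k : ℕ) (γ : ι → M) : Matrix (Fin k) ι M :=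
  of fun i j => γ j ^ q ^ (i : ℕ)

section Moore

variable {F L : Type*} [Field F] [Fintype F] [Field L] [Algebra F L]

variable (F) in
theorem eval_qPolynomial_eq_frobenius_sum {k : ℕ} (c : Fin k → L) (x : L) :
    (qPolynomial (Fintype.card F) c).eval x =
      (∑ i : Fin k, c i • (FiniteField.frobeniusAlgHom F L ^ (i : ℕ)).toLinearMap) x := by
  simp [qPolynomial, eval_finsetSum, AlgHom.coe_pow, FiniteField.coe_frobeniusAlgHom,
    pow_iterate]

theorem isRoot_qPolynomial_of_mem_span {k : ℕ} {c : Fin k → L} {ι : Type*} {γ : ι → L}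
    (hγ : ∀ j, (qPolynomial (Fintype.card F) c).IsRoot (γ j)) {x : L}
    (hx : x ∈ Submodule.span F (Set.range γ)) : (qPolynomial (Fintype.card F) c).IsRoot x := by
  have hspan : Submodule.span F (Set.range γ) ≤ LinearMap.ker
      (∑ i : Fin k, c i • (FiniteField.frobeniusAlgHom F L ^ (i : ℕ)).toLinearMap) := by
    rw [Submodule.span_le]
    rintro _ ⟨j, rfl⟩
    exact (eval_qPolynomial_eq_frobenius_sum F c (γ j)).symm.trans (hγ j)
  exact (eval_qPolynomial_eq_frobenius_sum F c x).trans (hspan hx)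

theorem isUnit_mooreMatrix {k : ℕ} {γ : Fin k → L} (hγ : LinearIndependent F γ) :
    IsUnit (mooreMatrix (Fintype.card F) k γ) := by
  rw [isUnit_iff_isUnit_det, isUnit_iff_ne_zero]
  intro hdet
  obtain ⟨c, hc, hcγ⟩ := exists_vecMul_eq_zero_iff.2 hdet
  have hq : 1 < Fintype.card F := Fintype.one_lt_card
  have hroot (j : Fin k) : (qPolynomial (Fintype.card F) c).IsRoot (γ j) := by
    simpa [qPolynomial, eval_finsetSum, vecMul, dotProduct, mooreMatrix] using congrFun hcγ j
  exact (natDegree_qPolynomial_lt hq c).not_ge <| card_pow_le_natDegree_of_isRoot_span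
    (qPolynomial_ne_zero hq hc) hγ fun x hx => isRoot_qPolynomial_of_mem_span hroot hx

theorem colRank_mooreMatrix {k n : ℕ} {γ : Fin n → L} {S : Finset (Fin n)} (hS : S.card = k)
    (hγ : LinearIndependent F fun j : S => γ j) :
    colRank (mooreMatrix (Fintype.card F) k γ) S = k := by
  let e : Fin k ≃ S := (S.equivFinOfCardEq hS).symm
  have hsq : IsUnit (mooreMatrix (Fintype.card F) k fun i => γ (e i)) :=
    isUnit_mooreMatrix (hγ.comp e e.injective)
  have hsub : (mooreMatrix (Fintype.card F) k γ).submatrix id ((↑) : S → Fin n) =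
      (mooreMatrix (Fintype.card F) k fun i => γ (e i)).submatrix (Equiv.refl _) e.symm := by
    ext i j; simp [mooreMatrix]
  rw [colRank, hsub, rank_submatrix, rank_of_isUnit _ hsq, Fintype.card_fin]

end Moore

theorem moore_code_is_mrsc_general {F L : Type*} [Field F] [Fintype F] [Field L] [Algebra F L]
    {q n t k : ℕ} (hq : Fintype.card F = q)
    (G0 : Matrix (Fin t) (Fin n) F) (b : Module.Basis (Fin t) F L)
    (β : Fin n → L) (hβ : ∀ j, β j = ∑ i, b i * algebraMap F L (G0 i j)) :
    ∀ S : Finset (Fin n), S.card = k →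
      colRank (G0.map (algebraMap F L)) S = k →
      colRank (Matrix.of fun (i : Fin k) (j : Fin n) => β j ^ q ^ (i : ℕ)) S = k := by
  subst hq
  intro S hS hrank
  have hcols : LinearIndependent F fun j : S => G0.col j := by
    rw [← linearIndependent_algebraMap_comp_iff (S := L)]
    rw [← hS] at hrank
    exact (colRank_eq_card_iff _ S).1 hrank
  have hβ_basis : β = b.equivFun.symm ∘ G0.col := by
    ext j
    rw [hβ, Function.comp_apply, Module.Basis.equivFun_symm_apply]
    exact Finset.sum_congr rfl fun i _ => ((Algebra.smul_def _ _).trans (mul_comm _ _)).symm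
  refine colRank_mooreMatrix (F := F) hS ?_
  rw [hβ_basis]
  exact hcols.map' _ b.equivFun.symm.ker

/-- the Moore-type code built from `β = α·G0` is an MRSC of the code
generated by `G0` over the extension field `F_Q`, `Q = q^t`. -/
theorem moore_code_is_mrsc {F L : Type*} [Field F] [Fintype F] [Field L] [Algebra F L]
    {q n t k : ℕ} (hq : Fintype.card F = q) (ht : Module.finrank F L = t) (hk : k ≤ t)
    (G0 : Matrix (Fin t) (Fin n) F) (b : Module.Basis (Fin t) F L)
    (β : Fin n → L) (hβ : ∀ j, β j = ∑ i, b i * algebraMap F L (G0 i j)) :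
    ∀ S : Finset (Fin n), S.card = k →
      colRank (G0.map (algebraMap F L)) S = k →
      colRank (Matrix.of fun (i : Fin k) (j : Fin n) => β j ^ q ^ (i : ℕ)) S = k :=
  moore_code_is_mrsc_general hq G0 b β hβ
end

section
/- Let C_0 be an [n,t] linear code over F_q with generator matrix G_0, and suppose C_0^{(e)} is an [n+Δ, t] extension code with generator matrix G_0^{(e)} = [G_0 | Q'] for some t×Δ matrix Q', with Δ < t, satisfying: for every S ⊆ [n] with |S| = t - Δ, rank(G_0^{(e)}|_{S ∪ {n+1,...,n+Δ}}) = rank(G_0|_S) + Δ. Then the shortened code (C_0^{(e)})^{[n]} (the set of codewords of C_0^{(e)} supported on the first n coordinates, restricted to those coordinates) is an [n, t-Δ] maximally recoverable subcode of C_0. -/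
open Matrix

/-!
A codeword of the extended code is `x ᵥ* [G₀ | Q']`; it vanishes on the last `Δ` coordinates
exactly when `x ᵥ* Q' = 0`, so the shortened code is the image under `G₀` of the left kernel
`K` of `Q'`. The rank condition at any `S` of size `t - Δ`, together with
`rank [A | B] ≤ rank A + rank B`, forces `rank Q' = Δ`, hence `dim K = t - Δ`. When moreover
`rank G₀|_S = t - Δ`, the matrix `[G₀|_S | Q']` has full row rank `t`, so `K` meets the left
kernel of `G₀|_S` trivially and the restriction of the shortened code to `S` still has
dimension `t - Δ`.
-/

section VecMul
variable {F : Type*} [Field F] {m α β : Type*} [Fintype m]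

theorem rowSpan_eq_range_vecMulLinear (G : Matrix m α F) :
    rowSpan G = LinearMap.range G.vecMulLinear :=
  (range_vecMulLinear G).symm

theorem ker_vecMulLinear_fromCols (A : Matrix m α F) (B : Matrix m β F) :
    LinearMap.ker (fromCols A B).vecMulLinear =
      LinearMap.ker A.vecMulLinear ⊓ LinearMap.ker B.vecMulLinear := by
  ext x
  simp only [LinearMap.mem_ker, Submodule.mem_inf, vecMulLinear_apply, vecMul_fromCols]
  rw [← Sum.elim_zero_zero, Sum.elim_eq_iff]

theorem finrank_ker_vecMulLinear_add_rank [Fintype α] (M : Matrix m α F) :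
    Module.finrank F (LinearMap.ker M.vecMulLinear) + M.rank = Fintype.card m := by
  rw [← rank_transpose, rank, mulVecLin_transpose, add_comm,
    LinearMap.finrank_range_add_finrank_ker, Module.finrank_fintype_fun_eq_card]

theorem ker_vecMulLinear_eq_bot_of_rank_eq [Fintype α] {M : Matrix m α F}
    (h : M.rank = Fintype.card m) : LinearMap.ker M.vecMulLinear = ⊥ := by
  have := finrank_ker_vecMulLinear_add_rank M
  exact Submodule.finrank_eq_zero.mp (by omega)

theorem rank_fromCols_le [Fintype α] [Fintype β] (A : Matrix m α F) (B : Matrix m β F) :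
    (fromCols A B).rank ≤ A.rank + B.rank := by
  have hcols : Set.range (fromCols A B).col = Set.range A.col ∪ Set.range B.col := by
    rw [← Set.Sum.elim_range]
    congr 1
    ext (j | j) <;> rfl
  rw [rank_eq_finrank_span_cols, hcols, Submodule.span_union, rank_eq_finrank_span_cols,
    rank_eq_finrank_span_cols]
  exact Submodule.finrank_add_le_finrank_add_finrank _ _

end VecMul

theorem finrank_map_eq_of_disjoint_ker {F V W : Type*} [Field F] [AddCommGroup V] [Module F V]
    [AddCommGroup W] [Module F W] {K : Submodule F V} {f : V →ₗ[F] W}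
    (h : Disjoint K (LinearMap.ker f)) :
    Module.finrank F (K.map f) = Module.finrank F K := by
  rw [← LinearMap.range_domRestrict]
  exact LinearMap.finrank_range_of_inj (LinearMap.injective_domRestrict_iff.mpr h)

section Shortening
variable {F : Type*} [Field F] {m α β : Type*} [Fintype m]

theorem shortenSum_rowSpan_fromCols (A : Matrix m α F) (B : Matrix m β F) :
    shortenSum (rowSpan (fromCols A B)) =
      (LinearMap.ker B.vecMulLinear).map A.vecMulLinear := by
  ext y
  simp only [shortenSum, rowSpan_eq_range_vecMulLinear, Submodule.mem_map, Submodule.mem_inf,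
    LinearMap.mem_range, Submodule.mem_iInf, LinearMap.mem_ker, vecMulLinear_apply,
    vecMul_fromCols, LinearMap.proj_apply]
  constructor
  · rintro ⟨_, ⟨⟨x, rfl⟩, hB⟩, rfl⟩
    exact ⟨x, funext hB, rfl⟩
  · rintro ⟨x, hB, rfl⟩
    exact ⟨_, ⟨⟨x, rfl⟩, congrFun hB⟩, rfl⟩

theorem restrRank_map_vecMulLinear (G : Matrix m α F) (K : Submodule F (m → F))
    (S : Finset α) :
    restrRank (K.map G.vecMulLinear) S =
      Module.finrank F (K.map (G.submatrix id (fun j : S => (j : α))).vecMulLinear) := by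
  rw [restrRank, ← Submodule.map_comp]
  rfl

end Shortening

theorem shortening_of_extension_is_mrsc_general {F : Type*} [Field F]
    {n t Δ : ℕ} (hΔ : Δ < t)
    (G0 : Matrix (Fin t) (Fin n) F) (hG0 : G0.rank = t)
    (Q' : Matrix (Fin t) (Fin Δ) F)
    (hext : ∀ S : Finset (Fin n), S.card = t - Δ →
      (Matrix.fromCols (G0.submatrix id (fun j : S => (j : Fin n))) Q').rank =
        colRank G0 S + Δ) :
    Module.finrank F (shortenSum (rowSpan (Matrix.fromCols G0 Q'))) = t - Δ ∧
      (∀ x ∈ shortenSum (rowSpan (Matrix.fromCols G0 Q')), x ∈ rowSpan G0) ∧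
      (∀ S : Finset (Fin n), S.card = t - Δ → colRank G0 S = t - Δ →
        restrRank (shortenSum (rowSpan (Matrix.fromCols G0 Q'))) S = t - Δ) := by
  have hQ' : Q'.rank = Δ := by
    have htn : t - Δ ≤ (Finset.univ : Finset (Fin n)).card := by
      rw [Finset.card_univ, Fintype.card_fin]
      have := G0.rank_le_width
      omega
    obtain ⟨S, -, hS⟩ := Finset.exists_subset_card_eq htn
    have hfrom := rank_fromCols_le (G0.submatrix id (fun j : S => (j : Fin n))) Q'
    rw [hext S hS, colRank] at hfrom
    have := Q'.rank_le_width
    omega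
  have hK : Module.finrank F (LinearMap.ker Q'.vecMulLinear) = t - Δ := by
    have := finrank_ker_vecMulLinear_add_rank Q'
    rw [hQ', Fintype.card_fin] at this
    omega
  rw [shortenSum_rowSpan_fromCols]
  refine ⟨?_, fun x hx => ?_, fun S hS hcol => ?_⟩
  · have hG0inj := ker_vecMulLinear_eq_bot_of_rank_eq (hG0.trans (Fintype.card_fin t).symm)
    rw [finrank_map_eq_of_disjoint_ker (hG0inj ▸ disjoint_bot_right), hK]
  · rw [rowSpan_eq_range_vecMulLinear]
    exact LinearMap.map_le_range hx
  · have hfull : LinearMap.ker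
        (fromCols (G0.submatrix id (fun j : S => (j : Fin n))) Q').vecMulLinear = ⊥ :=
      ker_vecMulLinear_eq_bot_of_rank_eq (by rw [hext S hS, hcol, Fintype.card_fin]; omega)
    rw [ker_vecMulLinear_fromCols, inf_comm] at hfull
    rw [restrRank_map_vecMulLinear, finrank_map_eq_of_disjoint_ker (disjoint_iff.mpr hfull), hK]

/-- if the extension `[G0 | Q']` satisfies the rank condition on all
column sets of size `t - Δ`, then the shortening of the extended code to the first `n`
coordinates is an `[n, t-Δ]` MRSC of `C₀`. -/
theorem shortening_of_extension_is_mrsc {F : Type*} [Field F] [Fintype F]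
    {n t Δ : ℕ} (hΔ : Δ < t)
    (G0 : Matrix (Fin t) (Fin n) F) (hG0 : G0.rank = t)
    (Q' : Matrix (Fin t) (Fin Δ) F)
    (hext : ∀ S : Finset (Fin n), S.card = t - Δ →
      (Matrix.fromCols (G0.submatrix id (fun j : S => (j : Fin n))) Q').rank =
        colRank G0 S + Δ) :
    Module.finrank F (shortenSum (rowSpan (Matrix.fromCols G0 Q'))) = t - Δ ∧
      (∀ x ∈ shortenSum (rowSpan (Matrix.fromCols G0 Q')), x ∈ rowSpan G0) ∧
      (∀ S : Finset (Fin n), S.card = t - Δ → colRank G0 S = t - Δ →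
        restrRank (shortenSum (rowSpan (Matrix.fromCols G0 Q'))) S = t - Δ) :=
  shortening_of_extension_is_mrsc_general hΔ G0 hG0 Q' hext
end

section
/- Let a ∈ F_q^K and let A be the m × mK block-diagonal matrix with m copies of the row vector a. Let Q be an m×(m-2ε) matrix over F_q such that Q^T generates an [m, m-2ε] MDS code, and let A^{(e)} = [A | Q]. Then for every S ⊆ [mK] with |S| = 2ε, rank(A^{(e)}|_{S ∪ {mK+1, ..., mK+m-2ε}}) = rank(A|_S) + (m - 2ε). -/
open Matrix

/-!
The columns of `A|_S` are supported on the rows `S.image Prod.fst`, of which there are at most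
`2ε`. Hence some `m - 2ε` rows `T` avoid them, and by the MDS property `Q` restricted to `T` is
invertible. A vector in both column spaces vanishes on `T`, so it is `Q y` with `Q|_T y = 0`,
i.e. `0`. The two column spaces are therefore independent, and `Q` has full column rank.
-/

namespace Matrix

variable {F : Type*} [Field F] {m m' ι n : Type*}

theorem linearIndependent_col_of_submatrix {Q : Matrix m n F} (e : m' → m)
    (hQ : LinearIndependent F (Q.submatrix e id).col) : LinearIndependent F Q.col :=
  hQ.of_comp (LinearMap.funLeft F F e)

variable [Fintype ι] [Fintype n]

theorem linearIndependent_col_iff_rank_eq_card {M : Matrix m n F} :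
    LinearIndependent F M.col ↔ M.rank = Fintype.card n := by
  rw [linearIndependent_iff_card_eq_finrank_span, rank_eq_finrank_span_cols, eq_comm]
  rfl

theorem range_mulVecLin_fromCols (B : Matrix m ι F) (Q : Matrix m n F) :
    LinearMap.range (fromCols B Q).mulVecLin =
      LinearMap.range B.mulVecLin ⊔ LinearMap.range Q.mulVecLin := by
  have hcol : (fromCols B Q).col = Sum.elim B.col Q.col := by
    ext (j | j) i <;> rfl
  simp only [range_mulVecLin, hcol, Set.Sum.elim_range, Submodule.span_union]

theorem rank_fromCols_of_disjoint {B : Matrix m ι F} {Q : Matrix m n F}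
    (h : Disjoint (LinearMap.range B.mulVecLin) (LinearMap.range Q.mulVecLin)) :
    (fromCols B Q).rank = B.rank + Q.rank := by
  have := Submodule.finrank_sup_add_finrank_inf_eq
    (LinearMap.range B.mulVecLin) (LinearMap.range Q.mulVecLin)
  rwa [h.eq_bot, finrank_bot, add_zero, ← range_mulVecLin_fromCols] at this

theorem disjoint_range_mulVecLin_of_rows_eq_zero {B : Matrix m ι F} {Q : Matrix m n F} (e : m' → m)
    (hB : ∀ i j, B (e i) j = 0) (hQ : LinearIndependent F (Q.submatrix e id).col) :
    Disjoint (LinearMap.range B.mulVecLin) (LinearMap.range Q.mulVecLin) := by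
  rw [Submodule.disjoint_def]
  rintro _ ⟨x, rfl⟩ ⟨y, hy⟩
  have hy0 : y = 0 := by
    refine mulVec_injective_iff.2 hQ ?_
    ext i
    simp only [mulVecLin_apply] at hy
    simpa [mulVec, dotProduct, hB] using congrFun hy (e i)
  simpa [hy0] using hy.symm

end Matrix

theorem striped_extension_rank_general {F : Type*} [Field F] {m K ε : ℕ}
    (a : Fin K → F)
    (A : Matrix (Fin m) (Fin m × Fin K) F)
    (hA : ∀ i j, A i j = if i = j.1 then a j.2 else 0)
    (Q : Matrix (Fin m) (Fin (m - 2 * ε)) F)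
    (hMDS : ∀ T : Finset (Fin m), T.card = m - 2 * ε → colRank Qᵀ T = m - 2 * ε) :
    ∀ S : Finset (Fin m × Fin K), S.card = 2 * ε →
      (Matrix.fromCols (A.submatrix id (fun j : S => (j : Fin m × Fin K))) Q).rank =
        colRank A S + (m - 2 * ε) := by
  intro S hS
  obtain ⟨T, hTS, hT⟩ : ∃ T ⊆ (S.image Prod.fst)ᶜ, T.card = m - 2 * ε := by
    refine Finset.exists_subset_card_eq ?_
    rw [Finset.card_compl, Fintype.card_fin]
    exact Nat.sub_le_sub_left (hS ▸ Finset.card_image_le) m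
  have hQT : LinearIndependent F (Q.submatrix ((↑) : T → Fin m) id).col := by
    rw [linearIndependent_col_iff_rank_eq_card, ← rank_transpose, transpose_submatrix,
      Fintype.card_fin]
    exact hMDS T hT
  have hAT : ∀ (i : T) (j : S), A i j = 0 := by
    intro i j
    have : (i : Fin m) ≠ (j : Fin m × Fin K).1 := fun h =>
      Finset.mem_compl.1 (hTS i.2) (Finset.mem_image.2 ⟨j, j.2, h.symm⟩)
    simp [hA, this]
  rw [rank_fromCols_of_disjoint (disjoint_range_mulVecLin_of_rows_eq_zero _ hAT hQT),
    linearIndependent_col_iff_rank_eq_card.1 (linearIndependent_col_of_submatrix _ hQT),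
    Fintype.card_fin]
  rfl

/-- the extended matrix `[A | Q]` satisfies the rank condition:
for every `S` of size `2ε`, adjoining all the extension columns increases the rank
of `A|_S` by exactly `m - 2ε`. -/
theorem striped_extension_rank {F : Type*} [Field F] [Fintype F] {m K ε : ℕ}
    (hε : 2 * ε ≤ m) (a : Fin K → F)
    (A : Matrix (Fin m) (Fin m × Fin K) F)
    (hA : ∀ i j, A i j = if i = j.1 then a j.2 else 0)
    (Q : Matrix (Fin m) (Fin (m - 2 * ε)) F)
    (hMDS : ∀ T : Finset (Fin m), T.card = m - 2 * ε → colRank Qᵀ T = m - 2 * ε) :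
    ∀ S : Finset (Fin m × Fin K), S.card = 2 * ε →
      (Matrix.fromCols (A.submatrix id (fun j : S => (j : Fin m × Fin K))) Q).rank =
        colRank A S + (m - 2 * ε) :=
  striped_extension_rank_general a A hA Q hMDS
end

section
/- Consider the point-to-point function update problem: a source knows X + E where X ∈ F_q^n, E ∈ F_q^n with Hamming weight at most ε; the receiver knows AX for a full-rank m×n matrix A (m ≤ n); the source transmits H(X+E) for an ℓ×n matrix H, and a decoder must output A(X+E) correctly for all such X, E. For any valid scheme (H, D), if Y ∈ F_q^n is 2ε-sparse and AY ≠ 0, then BY ≠ 0, where B is a generator matrix of C = C_H ∩ C_A (the intersection of the row spaces of H and A). -/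
open Matrix

/-!
If `BY = 0`, then `Y` lies in `C^⊥ = C_H^⊥ + C_A^⊥`, so `Y = u + w` with `Hu = 0` and `Aw = 0`.
Split `Y = E₁ - E₂` with `E₁, E₂` both `ε`-sparse. The inputs `(X, E) = (0, E₁)` and `(w, E₂)`
give the decoder the same side information (`A0 = Aw = 0`) and the same message
(`H(w + E₂) = H(E₁ - u) = HE₁`), so validity forces `AE₁ = A(w + E₂) = AE₂`, i.e. `AY = 0`.
-/

section Sparse

variable {ι : Type*} [Fintype ι] {β : ι → Type*} [∀ i, AddCommGroup (β i)] [∀ i, DecidableEq (β i)]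

theorem hammingNorm_piecewise_zero_le (t : Finset ι) (x : ∀ i, β i) [∀ i, Decidable (i ∈ t)] :
    hammingNorm (t.piecewise x 0) ≤ t.card :=
  Finset.card_le_card fun i hi => by
    by_contra hit
    simp [hit] at hi

theorem exists_sub_eq_of_hammingNorm_le_add (x : ∀ i, β i) {a b : ℕ}
    (hx : hammingNorm x ≤ a + b) :
    ∃ y z : ∀ i, β i, y - z = x ∧ hammingNorm y ≤ a ∧ hammingNorm z ≤ b := by
  classical
  set s : Finset ι := {i | x i ≠ 0}
  obtain ⟨t, hts, ht⟩ := Finset.exists_subset_card_eq (min_le_right a s.card)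
  refine ⟨t.piecewise x 0, t.piecewise x 0 - x, sub_sub_cancel _ _,
    (hammingNorm_piecewise_zero_le t x).trans (ht ▸ min_le_left _ _), ?_⟩
  calc hammingNorm (t.piecewise x 0 - x) ≤ (s \ t).card :=
        Finset.card_le_card fun i hi => by
          by_cases hit : i ∈ t
          · simp [hit] at hi
          · simpa [s, hit] using hi
    _ = s.card - min a s.card := by rw [Finset.card_sdiff_of_subset hts, ht]
    _ ≤ b := by change s.card ≤ a + b at hx; omega

end Sparse

section Duality

variable {F : Type*} [Field F] {ι : Type*}

theorem mem_dualAnnihilator_rowSpan_iff {m : Type*} {G : Matrix m ι F}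
    {φ : Module.Dual F (ι → F)} : φ ∈ (rowSpan G).dualAnnihilator ↔ ∀ i, φ (G i) = 0 := by
  rw [← SetLike.mem_coe, rowSpan, Submodule.coe_dualAnnihilator_span]
  exact Set.range_subset_iff

theorem ker_mulVecLin_eq_comap_dualAnnihilator_rowSpan [Fintype ι] [DecidableEq ι] {m : Type*}
    (G : Matrix m ι F) :
    LinearMap.ker G.mulVecLin =
      (rowSpan G).dualAnnihilator.comap (dotProductEquiv F ι).toLinearMap := by
  ext Y
  rw [Submodule.mem_comap, mem_dualAnnihilator_rowSpan_iff]
  simp [funext_iff, mulVec, dotProduct_comm]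

theorem ker_mulVecLin_eq_sup_of_rowSpan_eq_inf [Fintype ι] [DecidableEq ι] {m₁ m₂ m₃ : Type*}
    {B : Matrix m₁ ι F} {H : Matrix m₂ ι F} {A : Matrix m₃ ι F}
    (hB : rowSpan B = rowSpan H ⊓ rowSpan A) :
    LinearMap.ker B.mulVecLin = LinearMap.ker H.mulVecLin ⊔ LinearMap.ker A.mulVecLin := by
  simp only [ker_mulVecLin_eq_comap_dualAnnihilator_rowSpan, hB,
    Subspace.dualAnnihilator_inf_eq, Submodule.comap_equiv_eq_map_symm, Submodule.map_sup]

end Duality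

theorem IsValidScheme.mulVec_add_eq {F : Type*} [Field F] [DecidableEq F] {n m ℓ ε : ℕ}
    {A : Matrix (Fin m) (Fin n) F} {H : Matrix (Fin ℓ) (Fin n) F}
    {D : (Fin ℓ → F) → (Fin m → F) → (Fin m → F)} (hvalid : IsValidScheme A H ε D)
    {X X' E E' : Fin n → F} (hE : hammingNorm E ≤ ε) (hE' : hammingNorm E' ≤ ε)
    (hAX : A *ᵥ X = A *ᵥ X') (hH : H *ᵥ (X + E) = H *ᵥ (X' + E')) :
    A *ᵥ (X + E) = A *ᵥ (X' + E') := by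
  rw [← hvalid X E hE, ← hvalid X' E' hE', hAX, hH]

theorem valid_scheme_sparse_not_in_dual_general {F : Type*} [Field F] [DecidableEq F]
    {n m ℓ r ε : ℕ}
    (A : Matrix (Fin m) (Fin n) F)
    (H : Matrix (Fin ℓ) (Fin n) F)
    (D : (Fin ℓ → F) → (Fin m → F) → (Fin m → F))
    (hvalid : IsValidScheme A H ε D)
    (B : Matrix (Fin r) (Fin n) F)
    (hB : rowSpan B = rowSpan H ⊓ rowSpan A)
    (Y : Fin n → F) (hY : hammingNorm Y ≤ 2 * ε) (hAY : A.mulVec Y ≠ 0) :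
    B.mulVec Y ≠ 0 := by
  intro hBY
  have hY_ker : Y ∈ LinearMap.ker H.mulVecLin ⊔ LinearMap.ker A.mulVecLin := by
    rw [← ker_mulVecLin_eq_sup_of_rowSpan_eq_inf hB]
    exact hBY
  obtain ⟨u, hHu, w, hAw, rfl⟩ := Submodule.mem_sup.mp hY_ker
  replace hHu : H *ᵥ u = 0 := hHu
  replace hAw : A *ᵥ w = 0 := hAw
  obtain ⟨E₁, E₂, hE, hE₁, hE₂⟩ := exists_sub_eq_of_hammingNorm_le_add (u + w) (two_mul ε ▸ hY)
  have hwE₂ : w + E₂ = E₁ - u := by rw [sub_eq_iff_eq_add.mp hE]; abel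
  have hA_eq : A *ᵥ E₁ = A *ᵥ E₂ := by
    have h := hvalid.mulVec_add_eq (X := 0) (X' := w) hE₁ hE₂ (by rw [mulVec_zero, hAw])
      (by rw [zero_add, hwE₂, mulVec_sub, hHu, sub_zero])
    rwa [zero_add, mulVec_add, hAw, zero_add] at h
  exact hAY (by rw [← hE, mulVec_sub, hA_eq, sub_self])

/-- for any valid point-to-point scheme, every `2ε`-sparse `Y` with
`AY ≠ 0` also satisfies `BY ≠ 0`, where `B` generates `C_H ∩ C_A`. -/
theorem valid_scheme_sparse_not_in_dual {F : Type*} [Field F] [Fintype F] [DecidableEq F]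
    {n m ℓ r ε : ℕ} (hm : m ≤ n)
    (A : Matrix (Fin m) (Fin n) F) (hA : A.rank = m)
    (H : Matrix (Fin ℓ) (Fin n) F)
    (D : (Fin ℓ → F) → (Fin m → F) → (Fin m → F))
    (hvalid : IsValidScheme A H ε D)
    (B : Matrix (Fin r) (Fin n) F)
    (hB : rowSpan B = rowSpan H ⊓ rowSpan A)
    (Y : Fin n → F) (hY : hammingNorm Y ≤ 2 * ε) (hAY : A.mulVec Y ≠ 0) :
    B.mulVec Y ≠ 0 :=
  valid_scheme_sparse_not_in_dual_general A H D hvalid B hB Y hY hAY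
end

section
/- In the point-to-point function update problem with full-rank m×n matrix A and sparsity ε, for any valid scheme (H, D), dim(C_H ∩ C_A) ≥ min(m, 2ε). Consequently, the communication cost ℓ = rank(H) of any valid scheme satisfies ℓ ≥ min(m, 2ε). -/
open Matrix

/-!
Validity of the scheme forces the following: if `u ∈ ker H`, `v ∈ ker A` and `u + v` has weight
at most `2ε`, then `A u = 0`. Indeed, write `u + v = E + E'` with both errors of weight at most
`ε`; the inputs `0 + E` and `v - E'` carry the same side information `A 0 = A v = 0` and the same
syndrome `H E = H (E - u)`, so the decoder returns `A E = A (E - u)`.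

The space `W = ker H + ker A` has codimension `d = dim (C_H ∩ C_A)`. Completing `W` to the whole
space by `d` coordinate vectors `e_j, j ∈ T`, every `e_i` is `u_i + s_i` with `u_i ∈ W` supported on
`T ∪ {i}`, and `w - ∑ wᵢ uᵢ ∈ W` is supported on `T`; hence `W` is spanned by its vectors of weight
at most `d + 1`. If `d < 2ε` all of them lie in `ker A`, so `ker H ⊆ ker A`, and counting
dimensions gives `d = rank A = m`.
-/

section Hamming
variable {ι R : Type*} [Fintype ι] [DecidableEq ι]

theorem hammingNorm_le_card_of_eq_zero [Zero R] [DecidableEq R] {x : ι → R} {T : Finset ι}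
    (hx : ∀ i ∉ T, x i = 0) : hammingNorm x ≤ T.card :=
  Finset.card_le_card fun i hi => by
    by_contra hiT
    simp [hx i hiT] at hi

theorem exists_add_eq_of_hammingNorm_le_add [AddCommGroup R] [DecidableEq R] {a b : ℕ}
    (z : ι → R) (hz : hammingNorm z ≤ a + b) :
    ∃ x y : ι → R, x + y = z ∧ hammingNorm x ≤ a ∧ hammingNorm y ≤ b := by
  set S : Finset ι := {i | z i ≠ 0}
  obtain ⟨T, hTS, hT⟩ := Finset.exists_subset_card_eq (min_le_right a S.card)
  refine ⟨T.piecewise z 0, z - T.piecewise z 0, add_sub_cancel _ _, ?_, ?_⟩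
  · exact (hammingNorm_le_card_of_eq_zero (T := T) fun i hi => by simp [hi]).trans (by omega)
  · refine (hammingNorm_le_card_of_eq_zero (T := S \ T) fun i hi => ?_).trans ?_
    · by_cases hiT : i ∈ T
      · simp [hiT]
      · simpa [hiT, S] using hi
    · rw [Finset.card_sdiff_of_subset hTS]
      change S.card ≤ a + b at hz
      omega

end Hamming

namespace Submodule
variable {ι F : Type*} [DecidableEq ι] [Field F]

theorem apply_eq_zero_of_mem_span_single {T : Finset ι} {x : ι → F}
    (hx : x ∈ span F ((fun j => Pi.single j (1 : F)) '' (T : Set ι))) {i : ι} (hi : i ∉ T) :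
    x i = 0 := by
  induction hx using Submodule.span_induction with
  | mem y hy =>
    obtain ⟨j, hj, rfl⟩ := hy
    exact Pi.single_eq_of_ne (by rintro rfl; exact hi hj) _
  | zero => rfl
  | add y z _ _ hy hz => simp [hy, hz]
  | smul c y _ hy => simp [hy]

variable [Fintype ι]

theorem exists_finset_sup_span_single_eq_top (W : Submodule F (ι → F)) :
    ∃ T : Finset ι, T.card + Module.finrank F W = Fintype.card ι ∧
      W ⊔ span F ((fun j => Pi.single j (1 : F)) '' (T : Set ι)) = ⊤ := by
  set v : ι → (ι → F) ⧸ W := fun i => W.mkQ (Pi.single i 1)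
  have hv : span F (Set.range v) = ⊤ := by
    have hbasis : ⇑(Pi.basisFun F ι) = fun i => Pi.single i 1 := funext (Pi.basisFun_apply F ι)
    rw [Set.range_comp' W.mkQ, span_image, ← hbasis, (Pi.basisFun F ι).span_eq, map_top,
      range_mkQ]
  obtain ⟨t, htv, htcard, htspan, -⟩ := exists_finset_span_eq_linearIndepOn F (Set.range v)
  obtain ⟨s, hst, hsinj⟩ := Set.exists_image_eq_injOn_of_subset_range htv
  classical
  refine ⟨s.toFinset, ?_, ?_⟩
  · have : (Finset.image v s.toFinset) = t :=
      Finset.coe_injective (by rw [Finset.coe_image, Set.coe_toFinset, hst])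
    rw [← Finset.card_image_of_injOn (by simpa using hsinj), this, htcard, hv, finrank_top,
      W.finrank_quotient_add_finrank, Module.finrank_fintype_fun_eq_card]
  · rw [← comap_map_mkQ, map_span, Set.coe_toFinset, Set.image_image, hst, htspan, hv,
      comap_top]

variable [DecidableEq F]

theorem le_span_hammingNorm_le_of_sup_span_single_eq_top (W : Submodule F (ι → F)) (T : Finset ι)
    (hT : W ⊔ span F ((fun j => Pi.single j (1 : F)) '' (T : Set ι)) = ⊤) :
    W ≤ span F {w | w ∈ W ∧ hammingNorm w ≤ T.card + 1} := by
  set S := span F ((fun j => Pi.single j (1 : F)) '' (T : Set ι))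
  set L := span F {w | w ∈ W ∧ hammingNorm w ≤ T.card + 1}
  have hsingle (i : ι) : ∃ u ∈ W, ∃ s ∈ S, u + s = Pi.single i 1 :=
    mem_sup.1 (hT ▸ mem_top)
  choose u hu s hs hus using hsingle
  have hu_mem (i : ι) : u i ∈ L := by
    refine subset_span ⟨hu i, ?_⟩
    refine (hammingNorm_le_card_of_eq_zero (T := insert i T) fun j hj => ?_).trans
      (Finset.card_insert_le _ _)
    rw [Finset.mem_insert, not_or] at hj
    rw [eq_sub_of_add_eq (hus i), Pi.sub_apply, Pi.single_eq_of_ne hj.1,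
      apply_eq_zero_of_mem_span_single (hs i) hj.2, sub_zero]
  intro w hw
  have hdecomp : w - ∑ i, w i • u i = ∑ i, w i • s i := by
    rw [sub_eq_iff_eq_add, ← Finset.sum_add_distrib]
    simp_rw [← smul_add, add_comm (s _), hus, ← Pi.single_smul', smul_eq_mul, mul_one]
    exact (Finset.univ_sum_single w).symm
  have hrest : w - ∑ i, w i • u i ∈ L := by
    refine subset_span ⟨W.sub_mem hw (W.sum_mem fun i _ => W.smul_mem _ (hu i)), ?_⟩
    refine (hammingNorm_le_card_of_eq_zero fun j hj => ?_).trans (Nat.le_succ _)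
    rw [hdecomp]
    exact apply_eq_zero_of_mem_span_single (S.sum_mem fun i _ => S.smul_mem _ (hs i)) hj
  simpa using L.add_mem hrest
    (L.sum_mem (t := Finset.univ) fun i _ => L.smul_mem (w i) (hu_mem i))

theorem span_hammingNorm_le_eq (W : Submodule F (ι → F)) :
    span F {w | w ∈ W ∧ hammingNorm w ≤ Fintype.card ι - Module.finrank F W + 1} = W := by
  obtain ⟨T, hTcard, hT⟩ := W.exists_finset_sup_span_single_eq_top
  refine le_antisymm (span_le.2 fun w hw => hw.1) ?_
  rw [← hTcard, Nat.add_sub_cancel]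
  exact W.le_span_hammingNorm_le_of_sup_span_single_eq_top T hT

end Submodule

namespace Matrix
variable {ι κ α F : Type*} [Field F]

theorem finrank_rowSpan [Fintype ι] [Fintype α] (G : Matrix ι α F) :
    Module.finrank F (rowSpan G) = G.rank := by
  rw [← rank_transpose, rank_eq_finrank_span_cols]
  rfl

theorem rank_add_finrank_ker [Fintype α] (G : Matrix ι α F) :
    G.rank + Module.finrank F (LinearMap.ker G.mulVecLin) = Fintype.card α := by
  rw [rank, LinearMap.finrank_range_add_finrank_ker, Module.finrank_fintype_fun_eq_card]

theorem rowSpan_fromRows (H : Matrix ι α F) (A : Matrix κ α F) :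
    rowSpan (fromRows H A) = rowSpan H ⊔ rowSpan A := by
  rw [rowSpan, rowSpan, rowSpan, ← Submodule.span_union, ← Set.Sum.elim_range]
  congr 2

theorem ker_mulVecLin_fromRows [Fintype α] (H : Matrix ι α F) (A : Matrix κ α F) :
    LinearMap.ker (fromRows H A).mulVecLin =
      LinearMap.ker H.mulVecLin ⊓ LinearMap.ker A.mulVecLin := by
  ext x
  simp [fromRows_mulVec, funext_iff, Sum.forall]

theorem finrank_ker_sup_add_finrank_rowSpan_inf [Fintype ι] [Fintype κ] [Fintype α]
    (H : Matrix ι α F) (A : Matrix κ α F) :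
    Module.finrank F
        (LinearMap.ker H.mulVecLin ⊔ LinearMap.ker A.mulVecLin : Submodule F (α → F)) +
      Module.finrank F (rowSpan H ⊓ rowSpan A : Submodule F (α → F)) = Fintype.card α := by
  have hker := Submodule.finrank_sup_add_finrank_inf_eq
    (LinearMap.ker H.mulVecLin) (LinearMap.ker A.mulVecLin)
  have hrow := Submodule.finrank_sup_add_finrank_inf_eq (rowSpan H) (rowSpan A)
  rw [← ker_mulVecLin_fromRows] at hker
  rw [← rowSpan_fromRows, finrank_rowSpan, finrank_rowSpan, finrank_rowSpan] at hrow
  have := rank_add_finrank_ker H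
  have := rank_add_finrank_ker A
  have := rank_add_finrank_ker (fromRows H A)
  omega

end Matrix

namespace IsValidScheme
variable {F : Type*} [Field F] [DecidableEq F] {n m ℓ ε : ℕ} {A : Matrix (Fin m) (Fin n) F}
  {H : Matrix (Fin ℓ) (Fin n) F} {D : (Fin ℓ → F) → (Fin m → F) → (Fin m → F)}

theorem mulVec_add_eq_s12 (h : IsValidScheme A H ε D) {X X' E E' : Fin n → F}
    (hE : hammingNorm E ≤ ε) (hE' : hammingNorm E' ≤ ε)
    (hH : H *ᵥ (X + E) = H *ᵥ (X' + E')) (hA : A *ᵥ X = A *ᵥ X') :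
    A *ᵥ (X + E) = A *ᵥ (X' + E') := by
  rw [← h X E hE, ← h X' E' hE', hH, hA]

theorem mem_ker_of_hammingNorm_le (h : IsValidScheme A H ε D) {w : Fin n → F}
    (hw : w ∈ LinearMap.ker H.mulVecLin ⊔ LinearMap.ker A.mulVecLin)
    (hwt : hammingNorm w ≤ 2 * ε) : w ∈ LinearMap.ker A.mulVecLin := by
  obtain ⟨u, hu, v, hv, rfl⟩ := Submodule.mem_sup.1 hw
  rw [LinearMap.mem_ker, mulVecLin_apply] at hu hv ⊢
  obtain ⟨E, E', hEE', hE, hE'⟩ := exists_add_eq_of_hammingNorm_le_add (u + v) (two_mul ε ▸ hwt)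
  have hE'neg : hammingNorm (-E') ≤ ε := by
    rwa [← hammingNorm_comp (fun _ => Neg.neg) (fun _ => neg_injective) (fun _ => neg_zero)]
      at hE'
  have hsame : v + -E' = E - u := by rw [eq_sub_of_add_eq' hEE']; abel
  have key := h.mulVec_add_eq_s12 (X := 0) (X' := v) hE hE'neg
    (by rw [hsame, mulVec_sub, hu, sub_zero, zero_add]) (by rw [mulVec_zero, hv])
  rw [hsame, zero_add, mulVec_sub, eq_comm, sub_eq_self] at key
  rw [mulVec_add, key, hv, add_zero]

end IsValidScheme

theorem valid_scheme_cost_lower_bound_general {F : Type*} [Field F] [DecidableEq F]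
    {n m ℓ ε : ℕ}
    (A : Matrix (Fin m) (Fin n) F) (hA : A.rank = m)
    (H : Matrix (Fin ℓ) (Fin n) F)
    (D : (Fin ℓ → F) → (Fin m → F) → (Fin m → F))
    (hvalid : IsValidScheme A H ε D) :
    min m (2 * ε) ≤ Module.finrank F ((rowSpan H ⊓ rowSpan A : Submodule F (Fin n → F))) ∧
      min m (2 * ε) ≤ H.rank := by
  set W := LinearMap.ker H.mulVecLin ⊔ LinearMap.ker A.mulVecLin
  set d := Module.finrank F (rowSpan H ⊓ rowSpan A : Submodule F (Fin n → F))
  have hW : Module.finrank F W + d = n := by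
    simpa using Matrix.finrank_ker_sup_add_finrank_rowSpan_inf H A
  have hbound : min m (2 * ε) ≤ d := by
    by_contra! hd
    have hWA : W ≤ LinearMap.ker A.mulVecLin := by
      rw [← W.span_hammingNorm_le_eq, Submodule.span_le]
      rintro w ⟨hw, hwt⟩
      rw [Fintype.card_fin] at hwt
      exact hvalid.mem_ker_of_hammingNorm_le hw (by omega)
    have hWeq : W = LinearMap.ker A.mulVecLin := le_antisymm hWA le_sup_right
    have := A.rank_add_finrank_ker
    rw [← hWeq, Fintype.card_fin] at this
    omega
  refine ⟨hbound, hbound.trans ?_⟩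
  rw [← Matrix.finrank_rowSpan H]
  exact Submodule.finrank_mono inf_le_left

/-- for any valid point-to-point scheme,
`dim(C_H ∩ C_A) ≥ min(m, 2ε)`, and hence the communication cost
`ℓ = rank H ≥ min(m, 2ε)`. -/
theorem valid_scheme_cost_lower_bound {F : Type*} [Field F] [Fintype F] [DecidableEq F]
    {n m ℓ ε : ℕ} (hm : m ≤ n)
    (A : Matrix (Fin m) (Fin n) F) (hA : A.rank = m)
    (H : Matrix (Fin ℓ) (Fin n) F)
    (D : (Fin ℓ → F) → (Fin m → F) → (Fin m → F))
    (hvalid : IsValidScheme A H ε D) :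
    min m (2 * ε) ≤ Module.finrank F ((rowSpan H ⊓ rowSpan A : Submodule F (Fin n → F))) ∧
      min m (2 * ε) ≤ H.rank :=
  valid_scheme_cost_lower_bound_general A hA H D hvalid
end

section
/- In the point-to-point function update problem with full-rank m×n matrix A, sparsity ε, and m > 2ε, if (H, D) is a valid scheme achieving optimal communication cost ℓ = rank(H) = 2ε, then the code C_H generated by the rows of H is a maximally recoverable subcode of C_A. -/
open Matrix

section Aux
variable {F : Type*} [Field F] {n : ℕ}

private lemma ext_mulVec' {k : ℕ} (M : Matrix (Fin k) (Fin n) F) (S : Finset (Fin n)) (y : S → F) :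
    M.mulVec (fun j => if h : j ∈ S then y ⟨j, h⟩ else 0)
      = (M.submatrix id (fun j : S => (j : Fin n))).mulVec y := by
  funext i
  simp only [mulVec, dotProduct, submatrix_apply, id_eq]
  calc (∑ x : Fin n, M i x * if h : x ∈ S then y ⟨x, h⟩ else 0)
      = ∑ x ∈ S, (M i x * if h : x ∈ S then y ⟨x, h⟩ else 0) := by
        refine (Finset.sum_subset S.subset_univ ?_).symm
        intro x _ hx; simp [hx]
    _ = ∑ x ∈ S.attach, (M i ↑x * if h : (x : Fin n) ∈ S then y ⟨x, h⟩ else 0) :=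
        (Finset.sum_attach S _).symm
    _ = ∑ x : S, M i ↑x * y x := by
        rw [← Finset.univ_eq_attach] at *
        exact Finset.sum_congr rfl (fun x _ => by simp [x.2])

private lemma rank_eq_card_of_ker_bot {k : ℕ} {α : Type*} [Fintype α]
    (M : Matrix (Fin k) α F) (h : LinearMap.ker M.mulVecLin = ⊥) :
    M.rank = Fintype.card α := by
  have := LinearMap.finrank_range_add_finrank_ker M.mulVecLin
  rw [h, finrank_bot, add_zero, Module.finrank_fintype_fun_eq_card] at this
  exact this

private lemma ker_bot_of_rank_eq_card {k : ℕ} {α : Type*} [Fintype α]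
    (M : Matrix (Fin k) α F) (h : M.rank = Fintype.card α) :
    LinearMap.ker M.mulVecLin = ⊥ := by
  have := LinearMap.finrank_range_add_finrank_ker M.mulVecLin
  rw [Module.finrank_fintype_fun_eq_card] at this
  rw [← Submodule.finrank_eq_zero (S := LinearMap.ker M.mulVecLin)]
  have hr : M.rank = Module.finrank F (LinearMap.range M.mulVecLin) := rfl
  omega

end Aux

/-- if `m > 2ε` and a valid scheme achieves the optimal cost
`rank H = 2ε`, then `C_H` is necessarily a maximally recoverable subcode of `C_A`. -/
theorem optimal_scheme_is_mrsc {F : Type*} [Field F] [Fintype F] [DecidableEq F]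
    {n m ℓ ε : ℕ} (hm : m ≤ n) (hε : 2 * ε < m)
    (A : Matrix (Fin m) (Fin n) F) (hA : A.rank = m)
    (H : Matrix (Fin ℓ) (Fin n) F) (hH : H.rank = 2 * ε)
    (D : (Fin ℓ → F) → (Fin m → F) → (Fin m → F))
    (hvalid : IsValidScheme A H ε D) :
    ∀ S : Finset (Fin n), S.card = 2 * ε → colRank A S = 2 * ε →
      colRank H S = 2 * ε := by
  intro S hScard hAcol
  classical
  -- key consequence of validity: 2ε-sparse vectors in ker H are in ker A
  have key : ∀ Y : Fin n → F, (∀ j, Y j ≠ 0 → j ∈ S) → H.mulVec Y = 0 → A.mulVec Y = 0 := by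
    intro Y hsupp hHY
    obtain ⟨T, hTS, hTcard⟩ := Finset.exists_subset_card_eq (show ε ≤ S.card by omega)
    set E1 : Fin n → F := fun j => if j ∈ T then Y j else 0 with hE1def
    set E2 : Fin n → F := E1 - Y with hE2def
    have hnorm1 : hammingNorm E1 ≤ ε := by
      rw [← hTcard]
      apply Finset.card_le_card
      intro j hj
      simp only [Finset.mem_filter, Finset.mem_univ, true_and, hammingNorm] at hj ⊢
      by_contra hjT
      simp [hE1def, hjT] at hj
    have hnorm2 : hammingNorm E2 ≤ ε := by
      have hsd : (S \ T).card = ε := by rw [Finset.card_sdiff_of_subset hTS]; omega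
      rw [← hsd]
      apply Finset.card_le_card
      intro j hj
      simp only [Finset.mem_filter, Finset.mem_univ, true_and, hammingNorm,
        Finset.mem_sdiff] at hj ⊢
      simp only [hE2def, Pi.sub_apply, hE1def] at hj
      by_cases hjT : j ∈ T
      · simp [hjT] at hj
      · refine ⟨hsupp j ?_, hjT⟩
        simpa [hjT] using hj
    have h1 := hvalid 0 E1 hnorm1
    have h2 := hvalid 0 E2 hnorm2
    rw [zero_add] at h1 h2
    have hH12 : H.mulVec E2 = H.mulVec E1 := by
      rw [hE2def, mulVec_sub, hHY, sub_zero]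
    rw [hH12] at h2
    have hAe : A.mulVec E1 = A.mulVec E2 := by rw [← h1, ← h2]
    have hAz : A.mulVec (E1 - E2) = 0 := by rw [mulVec_sub, hAe, sub_self]
    simpa [hE2def] using hAz
  -- injectivity of A restricted to S
  have hScardF : Fintype.card S = 2 * ε := by rw [Fintype.card_coe, hScard]
  have hAker : LinearMap.ker (A.submatrix id (fun j : S => (j : Fin n))).mulVecLin = ⊥ :=
    ker_bot_of_rank_eq_card _ (by rw [hScardF]; exact hAcol)
  -- hence H restricted to S is injective
  have hHker : LinearMap.ker (H.submatrix id (fun j : S => (j : Fin n))).mulVecLin = ⊥ := by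
    rw [LinearMap.ker_eq_bot']
    intro y hy
    set Y : Fin n → F := fun j => if h : j ∈ S then y ⟨j, h⟩ else 0 with hYdef
    have hsupp : ∀ j, Y j ≠ 0 → j ∈ S := by
      intro j hj
      by_contra hjS
      simp [hYdef, hjS] at hj
    have hHY : H.mulVec Y = 0 := by
      rw [hYdef, ext_mulVec']
      exact hy
    have hAY := key Y hsupp hHY
    rw [hYdef, ext_mulVec'] at hAY
    have : y ∈ LinearMap.ker (A.submatrix id (fun j : S => (j : Fin n))).mulVecLin := hAY
    rw [hAker] at this
    exact this
  have := rank_eq_card_of_ker_bot _ hHker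
  rw [hScardF] at this
  exact this
end

section
/- For any [n,t] linear code C_0 over F_q and any k < t, if q > k·n^k, then there exists an [n,k] maximally recoverable subcode C of C_0. -/
open Matrix

/-!
The rows of `G` are chosen in the row space of `G0` one at a time. For each of the at most
`n.choose k ≤ k * n ^ k < q` sets `S` on which `G0` has rank `k`, the next row must avoid the
preimage, under restriction to `S`, of the span of the restrictions of the rows chosen so far;
this is a proper subspace because those restrictions span at most `k - 1` dimensions while the
row space of `G0` restricts onto all of `F ^ S`. Fewer than `q` proper subspaces never cover a
vector space over `F_q`, so such a row exists, and in the end the restrictions of the `k` rows to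
every such `S` are linearly independent.
-/

open Module Submodule

section

variable {F V ι : Type*} [Field F] [AddCommGroup V] [Module F V]

theorem exists_forall_notMem_of_forall_ne_top_of_card_lt (s : Finset ι) (p : ι → Submodule F V)
    (hp : ∀ i ∈ s, p i ≠ ⊤) (hs : s.card < ENat.card F) : ∃ v, ∀ i ∈ s, v ∉ p i := by
  have hunion := iUnion_ssubset_of_forall_ne_top_of_card_lt (Finset.univ : Finset s)
    (fun i => p i) (fun i => hp i i.2) (by simpa using hs)
  obtain ⟨v, hv⟩ := (Set.ne_univ_iff_exists_notMem _).mp (Set.ssubset_univ_iff.mp hunion)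
  simp only [Finset.mem_univ, Set.iUnion_true, Set.mem_iUnion, SetLike.mem_coe, not_exists,
    Subtype.forall] at hv
  exact ⟨v, hv⟩

theorem LinearMap.comap_span_ne_top_of_card_lt_finrank_range {N : Type*} [AddCommGroup N]
    [Module F N] (φ : V →ₗ[F] N) {k : ℕ} (w : Fin k → N)
    (hk : k < finrank F (LinearMap.range φ)) :
    comap φ (span F (Set.range w)) ≠ ⊤ := by
  intro htop
  have hle : LinearMap.range φ ≤ span F (Set.range w) := LinearMap.range_le_iff_comap.mpr htop
  have := FiniteDimensional.span_of_finite F (Set.finite_range w)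
  have hrange : finrank F (LinearMap.range φ) ≤ k := by
    simpa using (Submodule.finrank_mono hle).trans (finrank_range_le_card (R := F) w)
  omega

variable {N : ι → Type*} [∀ i, AddCommGroup (N i)] [∀ i, Module F (N i)]

theorem exists_forall_linearIndependent_comp (s : Finset ι) (φ : ∀ i, V →ₗ[F] N i) (k : ℕ)
    (hφ : ∀ i ∈ s, k ≤ finrank F (LinearMap.range (φ i))) (hs : s.card < ENat.card F) :
    ∃ g : Fin k → V, ∀ i ∈ s, LinearIndependent F (φ i ∘ g) := by
  induction k with
  | zero => exact ⟨Fin.elim0, fun _ _ => linearIndependent_empty_type⟩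
  | succ k ih =>
    obtain ⟨g, hg⟩ := ih fun i hi => (hφ i hi).trans' k.le_succ
    obtain ⟨v, hv⟩ := exists_forall_notMem_of_forall_ne_top_of_card_lt s
      (fun i => comap (φ i) (span F (Set.range (φ i ∘ g))))
      (fun i hi => (φ i).comap_span_ne_top_of_card_lt_finrank_range _ (hφ i hi)) hs
    refine ⟨Fin.snoc g v, fun i hi => ?_⟩
    rw [Fin.comp_snoc, linearIndependent_finSnoc]
    exact ⟨hg i hi, hv i hi⟩

theorem exists_linearIndependent_forall_linearIndependent_comp (s : Finset ι)
    (φ : ∀ i, V →ₗ[F] N i) {k : ℕ} (hk : k ≤ finrank F V)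
    (hφ : ∀ i ∈ s, k ≤ finrank F (LinearMap.range (φ i))) (hs : s.card < ENat.card F) :
    ∃ g : Fin k → V, LinearIndependent F g ∧ ∀ i ∈ s, LinearIndependent F (φ i ∘ g) := by
  rcases s.eq_empty_or_nonempty with rfl | ⟨i, hi⟩
  · obtain ⟨g, hg⟩ := exists_linearIndependent_of_le_finrank hk
    exact ⟨g, hg, by simp⟩
  · obtain ⟨g, hg⟩ := exists_forall_linearIndependent_comp s φ k hφ hs
    exact ⟨g, (hg i hi).of_comp (φ i), hg⟩

end

theorem colRank_eq_finrank_map {F m α : Type*} [Field F] [Finite m] [Fintype α]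
    (G : Matrix m α F) (S : Finset α) :
    colRank G S = finrank F ((rowSpan G).map (LinearMap.funLeft F F ((↑) : S → α))) := by
  rw [colRank, Matrix.rank_eq_finrank_span_row, rowSpan, Submodule.map_span, ← Set.range_comp]
  rfl

theorem Nat.choose_lt_of_mul_pow_lt {n k q : ℕ} (hq1 : 1 < q) (hq : k * n ^ k < q) :
    n.choose k < q := by
  rcases Nat.eq_zero_or_pos k with rfl | hk
  · simpa using hq1
  · exact (Nat.choose_le_pow n k).trans_lt ((Nat.le_mul_of_pos_left _ hk).trans_lt hq)

/-- existence of `[n,k]` maximally recoverable subcodes for field size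
`q > k·n^k` (Gopalan–Huang–Simitci–Yekhanin). -/
theorem mrsc_exists {F : Type*} [Field F] [Fintype F] {n t k : ℕ} (hk : k < t)
    (G0 : Matrix (Fin t) (Fin n) F) (hG0 : G0.rank = t)
    (hq : k * n ^ k < Fintype.card F) :
    ∃ G : Matrix (Fin k) (Fin n) F, G.rank = k ∧ (∀ i, G i ∈ rowSpan G0) ∧
      ∀ S : Finset (Fin n), S.card = k → colRank G0 S = k → colRank G S = k := by
  classical
  set V := rowSpan G0
  let restrict (S : Finset (Fin n)) : V →ₗ[F] (S → F) := (LinearMap.funLeft F F (↑)).domRestrict V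
  let good := (Finset.univ.powersetCard k).filter fun S : Finset (Fin n) => colRank G0 S = k
  have hV : finrank F V = t := (Matrix.rank_eq_finrank_span_row G0).symm.trans hG0
  have hgood : good.card < ENat.card F := by
    rw [ENat.card_eq_coe_fintype_card, Nat.cast_lt]
    refine (Finset.card_filter_le _ _).trans_lt ?_
    simpa using Nat.choose_lt_of_mul_pow_lt Fintype.one_lt_card hq
  obtain ⟨g, hg, hgS⟩ := exists_linearIndependent_forall_linearIndependent_comp good restrict
    (hV ▸ hk.le) (fun S hS => by
      rw [LinearMap.range_domRestrict, ← colRank_eq_finrank_map, (Finset.mem_filter.mp hS).2])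
    hgood
  refine ⟨Matrix.of (V.subtype ∘ g), ?_, fun i => (g i).2, fun S hSk hSr => ?_⟩
  · exact (LinearIndependent.rank_matrix (M := Matrix.of (V.subtype ∘ g))
      (hg.map' V.subtype V.ker_subtype)).trans (Fintype.card_fin k)
  · have hS : S ∈ good := Finset.mem_filter.mpr ⟨Finset.mem_powersetCard_univ.mpr hSk, hSr⟩
    rw [colRank]
    exact (LinearIndependent.rank_matrix (hgS S hS)).trans (Fintype.card_fin k)
end

section
/- Consider the two-receiver broadcast function update problem with full-rank matrices A (m_A × n) and B (m_B × n) over F_q, and sparsity parameter ε, and suppose C_A ∩ C_B = {0} (the row spaces intersect trivially). Then for any valid scheme (H, D_1, D_2), the communication cost satisfies ℓ = rank(H) ≥ min(m_A, 2ε) + min(m_B, 2ε). -/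
open Matrix

/-!
Let `K = ker H`. If `H z = 0` and `A z = A c` with `wt c ≤ 2ε`, write `c = y - y'` with
`wt y, wt y' ≤ ε`: the inputs `(z - y, y)` and `(-y', y')` both transmit `0` with the same side
information `A (z - y) = A (-y')`, so receiver 1 must output the same value `A z = 0`. Hence `A K`
meets the span of any `2ε` columns of `A` trivially; taking `min(m_A, 2ε)` independent columns,
`dim A K + min(m_A, 2ε) ≤ m_A`, and likewise for `B`. Independence of the row spaces gives
`dim (ker A ⊓ ker B) = n - m_A - m_B`, and `dim K ≤ dim A K + dim B K + dim (ker A ⊓ ker B)`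
then yields `min(m_A, 2ε) + min(m_B, 2ε) ≤ n - dim K = rank H`.
-/

open Module

section Hamming

variable {ι R : Type*} [Fintype ι] [DecidableEq R]

theorem hammingNorm_le_card_of_support_subset [Zero R] {x : ι → R} {s : Finset ι}
    (h : ∀ i, x i ≠ 0 → i ∈ s) : hammingNorm x ≤ s.card :=
  Finset.card_le_card fun i hi => h i (Finset.mem_filter.mp hi).2

theorem exists_eq_sub_of_hammingNorm_le_add [AddGroup R] {x : ι → R} {a b : ℕ}
    (h : hammingNorm x ≤ a + b) :
    ∃ y z : ι → R, x = y - z ∧ hammingNorm y ≤ a ∧ hammingNorm z ≤ b := by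
  classical
  set S : Finset ι := {i | x i ≠ 0}
  obtain ⟨T, hTS, hT⟩ := Finset.exists_subset_card_eq (min_le_left S.card a)
  refine ⟨T.piecewise x 0, T.piecewise 0 (-x), ?_, ?_, ?_⟩
  · ext i
    by_cases hi : i ∈ T <;> simp [hi]
  · refine (hammingNorm_le_card_of_support_subset fun i hi => ?_).trans
      (hT.trans_le (min_le_right _ _))
    by_contra hiT
    simp [hiT] at hi
  · refine (hammingNorm_le_card_of_support_subset (s := S \ T) fun i hi => ?_).trans ?_
    · by_cases hiT : i ∈ T
      · simp [hiT] at hi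
      · simp_all [S]
    · rw [Finset.card_sdiff_of_subset hTS]
      change S.card ≤ a + b at h
      omega

theorem hammingNorm_le_card_of_mem_span_single [DecidableEq ι] [Semiring R] {I : Finset ι}
    {c : ι → R} (hc : c ∈ Submodule.span R ((fun i => Pi.single i (1 : R)) '' (I : Set ι))) :
    hammingNorm c ≤ I.card := by
  have hsupp : Submodule.span R ((fun i => Pi.single i (1 : R)) '' (I : Set ι)) ≤
      Submodule.pi (I : Set ι)ᶜ fun _ => ⊥ := by
    rw [Submodule.span_le]
    rintro _ ⟨i, hi, rfl⟩
    exact Submodule.mem_pi.mpr fun j hj => Pi.single_eq_of_ne (by rintro rfl; exact hj hi) 1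
  refine hammingNorm_le_card_of_support_subset fun j hj => ?_
  by_contra hjI
  exact hj (Submodule.mem_pi.mp (hsupp hc) j hjI)

end Hamming

theorem exists_finset_card_eq_linearIndepOn {K V ι : Type*} [DivisionRing K] [AddCommGroup V]
    [Module K V] [Finite ι] (v : ι → V) {t : ℕ}
    (ht : t ≤ finrank K (Submodule.span K (Set.range v))) :
    ∃ I : Finset ι, I.card = t ∧ LinearIndepOn K v I := by
  obtain ⟨b, -, -, hspan, hb⟩ := exists_linearIndepOn_extension (linearIndepOn_empty K v)
    (Set.empty_subset Set.univ)
  have : Fintype b := Fintype.ofFinite b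
  have : FiniteDimensional K (Submodule.span K (v '' b)) :=
    FiniteDimensional.span_of_finite K (b.toFinite.image v)
  have hcard : t ≤ b.toFinset.card := calc
    t ≤ finrank K (Submodule.span K (Set.range v)) := ht
    _ ≤ finrank K (Submodule.span K (v '' b)) := by
      refine Submodule.finrank_mono (Submodule.span_le.mpr ?_)
      rwa [← Set.image_univ]
    _ ≤ b.toFinset.card := by
      rw [Set.image_eq_range, Set.toFinset_card]
      exact finrank_range_le_card _
  obtain ⟨I, hIb, hI⟩ := Finset.exists_subset_card_eq hcard
  exact ⟨I, hI, hb.mono fun i hi => Set.mem_toFinset.mp (hIb hi)⟩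

theorem Submodule.finrank_map_add_finrank_inf_ker {K V W : Type*} [DivisionRing K]
    [AddCommGroup V] [Module K V] [AddCommGroup W] [Module K W] [FiniteDimensional K V]
    (f : V →ₗ[K] W) (N : Submodule K V) :
    finrank K (N.map f) + finrank K ↥(N ⊓ LinearMap.ker f) = finrank K N := by
  have h := (f.domRestrict N).finrank_range_add_finrank_ker
  rwa [LinearMap.range_domRestrict, LinearMap.ker_domRestrict,
    (Submodule.equivMapOfInjective _ N.injective_subtype _).finrank_eq,
    Submodule.map_comap_subtype] at h

theorem Submodule.finrank_le_finrank_map_add_finrank_map_add_finrank_ker_inf {K V W₁ W₂ : Type*}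
    [DivisionRing K] [AddCommGroup V] [Module K V] [AddCommGroup W₁] [Module K W₁]
    [AddCommGroup W₂] [Module K W₂] [FiniteDimensional K V]
    (N : Submodule K V) (f : V →ₗ[K] W₁) (g : V →ₗ[K] W₂) :
    finrank K N ≤ finrank K (N.map f) + finrank K (N.map g) +
      finrank K ↥(LinearMap.ker f ⊓ LinearMap.ker g) := by
  have hf := N.finrank_map_add_finrank_inf_ker f
  have hg := (N ⊓ LinearMap.ker f).finrank_map_add_finrank_inf_ker g
  have hmap : finrank K ((N ⊓ LinearMap.ker f).map g) ≤ finrank K (N.map g) :=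
    Submodule.finrank_mono (Submodule.map_mono inf_le_left)
  have hker : finrank K ↥(N ⊓ LinearMap.ker f ⊓ LinearMap.ker g) ≤
      finrank K ↥(LinearMap.ker f ⊓ LinearMap.ker g) :=
    Submodule.finrank_mono (inf_le_inf_right _ inf_le_right)
  omega

theorem Matrix.rank_eq_finrank_rowSpan {F m n : Type*} [Field F] [Finite m] [Fintype n]
    (A : Matrix m n F) :
    A.rank = finrank F (rowSpan A) :=
  A.rank_eq_finrank_span_row

theorem Matrix.rowSpan_fromRows_s18 {F m₁ m₂ n : Type*} [Field F] (A : Matrix m₁ n F)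
    (B : Matrix m₂ n F) : rowSpan (A.fromRows B) = rowSpan A ⊔ rowSpan B :=
  (congrArg (Submodule.span F) (Set.Sum.elim_range A B)).trans (Submodule.span_union _ _)

theorem Matrix.finrank_ker_inf_ker_add_rank_add_rank {F m₁ m₂ n : Type*} [Field F] [Finite m₁]
    [Finite m₂] [Fintype n] (A : Matrix m₁ n F) (B : Matrix m₂ n F)
    (h : rowSpan A ⊓ rowSpan B = ⊥) :
    finrank F ↥(LinearMap.ker A.mulVecLin ⊓ LinearMap.ker B.mulVecLin) + A.rank + B.rank =
      Fintype.card n := by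
  have hker : LinearMap.ker (A.fromRows B).mulVecLin =
      LinearMap.ker A.mulVecLin ⊓ LinearMap.ker B.mulVecLin := by
    ext w
    simp [Matrix.fromRows_mulVec, funext_iff, Sum.forall]
  have hrank : (A.fromRows B).rank = A.rank + B.rank := by
    have hsup := Submodule.finrank_sup_add_finrank_inf_eq (rowSpan A) (rowSpan B)
    rw [h, finrank_bot, add_zero] at hsup
    rw [(A.fromRows B).rank_eq_finrank_rowSpan, A.rank_eq_finrank_rowSpan,
      B.rank_eq_finrank_rowSpan, Matrix.rowSpan_fromRows_s18, hsup]
  have := (A.fromRows B).mulVecLin.finrank_range_add_finrank_ker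
  rw [hker, finrank_fintype_fun_eq_card] at this
  change (A.fromRows B).rank + _ = _ at this
  omega

namespace IsValidScheme

variable {F : Type*} [Field F] [DecidableEq F] {n m ℓ ε : ℕ} {A : Matrix (Fin m) (Fin n) F}
  {H : Matrix (Fin ℓ) (Fin n) F} {D : (Fin ℓ → F) → (Fin m → F) → (Fin m → F)}

theorem mulVec_eq_zero (hD : IsValidScheme A H ε D) {w c : Fin n → F} (hw : H *ᵥ w = 0)
    (hwc : A *ᵥ w = A *ᵥ c) (hc : hammingNorm c ≤ 2 * ε) : A *ᵥ w = 0 := by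
  obtain ⟨y, z, rfl, hy, hz⟩ := exists_eq_sub_of_hammingNorm_le_add (hc.trans_eq (two_mul ε))
  have hw' := hD (w - y) y hy
  have h0 := hD (-z) z hz
  rw [sub_add_cancel, hw] at hw'
  rw [neg_add_cancel, Matrix.mulVec_zero, Matrix.mulVec_zero] at h0
  have hside : A *ᵥ (w - y) = A *ᵥ (-z) := by
    rw [Matrix.mulVec_sub, hwc, Matrix.mulVec_sub, Matrix.mulVec_neg]
    abel
  rw [← hw', hside, h0]

theorem disjoint_map_ker_span_col (hD : IsValidScheme A H ε D) {I : Finset (Fin n)}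
    (hI : I.card ≤ 2 * ε) :
    Disjoint ((LinearMap.ker H.mulVecLin).map A.mulVecLin) (Submodule.span F (A.col '' I)) := by
  have hcol : Submodule.span F (A.col '' I) =
      (Submodule.span F ((fun i => Pi.single i (1 : F)) '' (I : Set (Fin n)))).map A.mulVecLin := by
    rw [Submodule.map_span, Set.image_image]
    simp
  rw [hcol, Submodule.disjoint_def]
  rintro _ ⟨w, hw, rfl⟩ ⟨c, hc, hwc⟩
  exact hD.mulVec_eq_zero hw hwc.symm ((hammingNorm_le_card_of_mem_span_single hc).trans hI)

theorem finrank_map_ker_add_min_le_rank (hD : IsValidScheme A H ε D) :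
    finrank F ((LinearMap.ker H.mulVecLin).map A.mulVecLin) + min A.rank (2 * ε) ≤ A.rank := by
  obtain ⟨I, hIcard, hIind⟩ := exists_finset_card_eq_linearIndepOn A.col
    ((min_le_left _ (2 * ε)).trans_eq A.rank_eq_finrank_span_cols)
  have hU : finrank F (Submodule.span F (A.col '' I)) = min A.rank (2 * ε) := by
    rw [← hIcard, Set.image_eq_range, finrank_span_eq_card hIind]
    simp
  set V := (LinearMap.ker H.mulVecLin).map A.mulVecLin
  set U := Submodule.span F (A.col '' I)
  have hVU := Submodule.finrank_sup_add_finrank_inf_eq V U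
  rw [disjoint_iff.mp (hD.disjoint_map_ker_span_col (hIcard.trans_le (min_le_right _ _))),
    finrank_bot] at hVU
  have hUrange : U ≤ LinearMap.range A.mulVecLin := by
    rw [Submodule.span_le]
    rintro _ ⟨j, -, rfl⟩
    exact ⟨Pi.single j 1, A.mulVec_single_one j⟩
  have hle : finrank F ↥(V ⊔ U) ≤ A.rank :=
    Submodule.finrank_mono (sup_le (LinearMap.map_le_range) hUrange)
  omega

end IsValidScheme

theorem broadcast_trivial_intersection_bound_general {F : Type*} [Field F]
    [DecidableEq F] {n mA mB ℓ ε : ℕ}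
    (A : Matrix (Fin mA) (Fin n) F) (hA : A.rank = mA)
    (B : Matrix (Fin mB) (Fin n) F) (hB : B.rank = mB)
    (htriv : rowSpan A ⊓ rowSpan B = (⊥ : Submodule F (Fin n → F)))
    (H : Matrix (Fin ℓ) (Fin n) F)
    (D1 : (Fin ℓ → F) → (Fin mA → F) → (Fin mA → F))
    (D2 : (Fin ℓ → F) → (Fin mB → F) → (Fin mB → F))
    (h1 : IsValidScheme A H ε D1) (h2 : IsValidScheme B H ε D2) :
    min mA (2 * ε) + min mB (2 * ε) ≤ H.rank := by
  have hK := (LinearMap.ker H.mulVecLin).finrank_le_finrank_map_add_finrank_map_add_finrank_ker_inf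
    A.mulVecLin B.mulVecLin
  have hKA := h1.finrank_map_ker_add_min_le_rank
  have hKB := h2.finrank_map_ker_add_min_le_rank
  have hAB := A.finrank_ker_inf_ker_add_rank_add_rank B htriv
  have hH := H.mulVecLin.finrank_range_add_finrank_ker
  rw [Fintype.card_fin] at hAB
  rw [finrank_fin_fun] at hH
  change H.rank + _ = n at hH
  omega

/-- broadcast lower bound when the two row spaces intersect trivially:
`rank H ≥ min(m_A, 2ε) + min(m_B, 2ε)` for any valid broadcast scheme. -/
theorem broadcast_trivial_intersection_bound {F : Type*} [Field F] [Fintype F]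
    [DecidableEq F] {n mA mB ℓ ε : ℕ} (hmA : mA ≤ n) (hmB : mB ≤ n)
    (A : Matrix (Fin mA) (Fin n) F) (hA : A.rank = mA)
    (B : Matrix (Fin mB) (Fin n) F) (hB : B.rank = mB)
    (htriv : rowSpan A ⊓ rowSpan B = (⊥ : Submodule F (Fin n → F)))
    (H : Matrix (Fin ℓ) (Fin n) F)
    (D1 : (Fin ℓ → F) → (Fin mA → F) → (Fin mA → F))
    (D2 : (Fin ℓ → F) → (Fin mB → F) → (Fin mB → F))
    (h1 : IsValidScheme A H ε D1) (h2 : IsValidScheme B H ε D2) :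
    min mA (2 * ε) + min mB (2 * ε) ≤ H.rank :=
  broadcast_trivial_intersection_bound_general A hA B hB htriv H D1 D2 h1 h2
end
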